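/- In S_4, the set {(1 3), (1 2 3 4)} is a maximal independent set that does not generate S_4: it is independent, generates a proper subgroup of S_4, and for every g ∈ S_4 the set {(1 3), (1 2 3 4), g} is not independent. -/
import Mathlib

abbrev s4 : Equiv.Perm (Fin 4) := Equiv.swap 0 2
abbrev r4 : Equiv.Perm (Fin 4) := finRotate 4

def hfinset : Finset (Equiv.Perm (Fin 4)) :=
  {1, r4, r4*r4, r4*r4*r4, s4, s4*r4, s4*(r4*r4), s4*(r4*r4*r4)}

def H : Subgroup (Equiv.Perm (Fin 4)) where
  carrier := ↑hfinset
  one_mem' := by simp only [Finset.mem_coe]; decide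
  mul_mem' := by
    intro a b ha hb
    simp only [Finset.mem_coe] at ha hb ⊢
    revert a b ha hb; decide
  inv_mem' := by
    intro a ha
    simp only [Finset.mem_coe] at ha ⊢
    revert a ha; decide

lemma mem_H_iff (x : Equiv.Perm (Fin 4)) : x ∈ H ↔ x ∈ hfinset := Iff.rfl

def Kr : Subgroup (Equiv.Perm (Fin 4)) where
  carrier := ↑({1, r4, r4*r4, r4*r4*r4} : Finset (Equiv.Perm (Fin 4)))
  one_mem' := by simp only [Finset.mem_coe]; decide
  mul_mem' := by
    intro a b ha hb
    simp only [Finset.mem_coe] at ha hb ⊢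
    revert a b ha hb; decide
  inv_mem' := by
    intro a ha
    simp only [Finset.mem_coe] at ha ⊢
    revert a ha; decide

def Ks : Subgroup (Equiv.Perm (Fin 4)) where
  carrier := ↑({1, s4} : Finset (Equiv.Perm (Fin 4)))
  one_mem' := by simp only [Finset.mem_coe]; decide
  mul_mem' := by
    intro a b ha hb
    simp only [Finset.mem_coe] at ha hb ⊢
    revert a b ha hb; decide
  inv_mem' := by
    intro a ha
    simp only [Finset.mem_coe] at ha ⊢
    revert a ha; decide

lemma word_mem {x g r : Equiv.Perm (Fin 4)}
    (h : ∃ f : Fin 6 → Fin 3,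
      (List.ofFn (fun i => ![(1 : Equiv.Perm (Fin 4)), g, r] (f i))).prod = x) :
    x ∈ Subgroup.closure ({g, r} : Set (Equiv.Perm (Fin 4))) := by
  obtain ⟨f, rfl⟩ := h
  apply Subgroup.list_prod_mem
  intro y hy
  rw [List.mem_ofFn] at hy
  obtain ⟨i, rfl⟩ := hy
  show ![(1 : Equiv.Perm (Fin 4)), g, r] (f i) ∈ _
  generalize f i = j
  fin_cases j
  · exact one_mem _
  · exact Subgroup.subset_closure (Set.mem_insert _ _)
  · exact Subgroup.subset_closure (Set.mem_insert_of_mem _ rfl)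

lemma key (g : Equiv.Perm (Fin 4)) (hg : g ∉ hfinset) :
    s4 ∈ Subgroup.closure ({g, r4} : Set (Equiv.Perm (Fin 4))) := by
  apply word_mem
  have hcases : g = Equiv.swap 2 3 ∨
      g = Equiv.swap 1 2 ∨
      g = Equiv.swap 1 2 * Equiv.swap 2 3 ∨
      g = Equiv.swap 1 3 * Equiv.swap 2 3 ∨
      g = Equiv.swap 0 1 ∨
      g = Equiv.swap 0 1 * Equiv.swap 1 2 ∨
      g = Equiv.swap 0 1 * Equiv.swap 1 3 * Equiv.swap 2 3 ∨
      g = Equiv.swap 0 1 * Equiv.swap 1 3 ∨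
      g = Equiv.swap 0 2 * Equiv.swap 1 2 ∨
      g = Equiv.swap 0 2 * Equiv.swap 1 2 * Equiv.swap 2 3 ∨
      g = Equiv.swap 0 2 * Equiv.swap 2 3 ∨
      g = Equiv.swap 0 2 * Equiv.swap 1 3 * Equiv.swap 2 3 ∨
      g = Equiv.swap 0 3 * Equiv.swap 1 3 ∨
      g = Equiv.swap 0 3 * Equiv.swap 2 3 ∨
      g = Equiv.swap 0 3 ∨
      g = Equiv.swap 0 3 * Equiv.swap 1 2 * Equiv.swap 2 3 := by
    revert hg; revert g; decide
  rcases hcases with rfl|rfl|rfl|rfl|rfl|rfl|rfl|rfl|rfl|rfl|rfl|rfl|rfl|rfl|rfl|rfl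
  · exact ⟨![1,2,2,1,2,0], by decide⟩
  · exact ⟨![2,1,2,2,1,0], by decide⟩
  · exact ⟨![1,2,1,0,0,0], by decide⟩
  · exact ⟨![1,1,2,1,1,0], by decide⟩
  · exact ⟨![1,2,2,1,2,0], by decide⟩
  · exact ⟨![1,2,1,2,2,0], by decide⟩
  · exact ⟨![1,1,2,0,0,0], by decide⟩
  · exact ⟨![1,2,1,0,0,0], by decide⟩
  · exact ⟨![1,2,2,1,1,2], by decide⟩
  · exact ⟨![1,1,2,0,0,0], by decide⟩
  · exact ⟨![1,2,1,2,2,0], by decide⟩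
  · exact ⟨![2,1,1,0,0,0], by decide⟩
  · exact ⟨![1,1,2,1,1,0], by decide⟩
  · exact ⟨![1,2,2,1,1,2], by decide⟩
  · exact ⟨![2,1,2,2,1,0], by decide⟩
  · exact ⟨![2,1,1,0,0,0], by decide⟩

lemma H_le_closure : ∀ x ∈ hfinset,
    x ∈ Subgroup.closure ({s4, r4} : Set (Equiv.Perm (Fin 4))) := by
  intro x hx
  have hs : s4 ∈ Subgroup.closure ({s4, r4} : Set (Equiv.Perm (Fin 4))) :=
    Subgroup.subset_closure (Set.mem_insert _ _)
  have hr : r4 ∈ Subgroup.closure ({s4, r4} : Set (Equiv.Perm (Fin 4))) :=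
    Subgroup.subset_closure (Set.mem_insert_of_mem _ rfl)
  fin_cases hx
  · exact one_mem _
  · exact hr
  · exact mul_mem hr hr
  · exact mul_mem (mul_mem hr hr) hr
  · exact hs
  · exact mul_mem hs hr
  · exact mul_mem hs (mul_mem hr hr)
  · exact mul_mem hs (mul_mem (mul_mem hr hr) hr)

/-- In `S₄`, the set `{(1 3), (1 2 3 4)}` is a maximal independent set that does not
generate `S₄`: it is independent, generates a proper subgroup, and cannot be extended
to a larger independent set. Points are `0,1,2,3`. -/
theorem stmt14 :
    (∀ a ∈ ({Equiv.swap 0 2, finRotate 4} : Set (Equiv.Perm (Fin 4))),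
        a ∉ Subgroup.closure
          (({Equiv.swap 0 2, finRotate 4} : Set (Equiv.Perm (Fin 4))) \ {a})) ∧
    Subgroup.closure ({Equiv.swap 0 2, finRotate 4} : Set (Equiv.Perm (Fin 4))) ≠ ⊤ ∧
    ∀ g : Equiv.Perm (Fin 4), g ∉ ({Equiv.swap 0 2, finRotate 4} : Set (Equiv.Perm (Fin 4))) →
      ¬ (∀ a ∈ insert g ({Equiv.swap 0 2, finRotate 4} : Set (Equiv.Perm (Fin 4))),
          a ∉ Subgroup.closure
            ((insert g ({Equiv.swap 0 2, finRotate 4} : Set (Equiv.Perm (Fin 4)))) \ {a})) := by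
  have hsr : s4 ≠ r4 := by decide
  refine ⟨?_, ?_, ?_⟩
  · intro a ha
    rcases ha with rfl | ha
    · have hset : ({s4, r4} : Set (Equiv.Perm (Fin 4))) \ {s4} = {r4} := by
        ext x
        simp only [Set.mem_diff, Set.mem_insert_iff, Set.mem_singleton_iff]
        constructor
        · rintro ⟨rfl | rfl, hne⟩
          · exact absurd rfl hne
          · rfl
        · rintro rfl; exact ⟨Or.inr rfl, hsr.symm⟩
      rw [hset]
      intro hmem
      have hle : Subgroup.closure ({r4} : Set (Equiv.Perm (Fin 4))) ≤ Kr := by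
        rw [Subgroup.closure_le]
        intro x hx
        rw [Set.mem_singleton_iff] at hx
        subst hx
        exact (show r4 ∈ ({1, r4, r4*r4, r4*r4*r4} : Finset (Equiv.Perm (Fin 4))) by decide)
      have : s4 ∈ ({1, r4, r4*r4, r4*r4*r4} : Finset (Equiv.Perm (Fin 4))) := hle hmem
      exact absurd this (by decide)
    · rw [Set.mem_singleton_iff] at ha
      subst ha
      have hset : ({s4, r4} : Set (Equiv.Perm (Fin 4))) \ {r4} = {s4} := by
        ext x
        simp only [Set.mem_diff, Set.mem_insert_iff, Set.mem_singleton_iff]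
        constructor
        · rintro ⟨rfl | rfl, hne⟩
          · rfl
          · exact absurd rfl hne
        · rintro rfl; exact ⟨Or.inl rfl, hsr⟩
      rw [hset]
      intro hmem
      have hle : Subgroup.closure ({s4} : Set (Equiv.Perm (Fin 4))) ≤ Ks := by
        rw [Subgroup.closure_le]
        intro x hx
        rw [Set.mem_singleton_iff] at hx
        subst hx
        exact (show s4 ∈ ({1, s4} : Finset (Equiv.Perm (Fin 4))) by decide)
      have : r4 ∈ ({1, s4} : Finset (Equiv.Perm (Fin 4))) := hle hmem
      exact absurd this (by decide)
  · intro htop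
    have hle : Subgroup.closure ({s4, r4} : Set (Equiv.Perm (Fin 4))) ≤ H := by
      rw [Subgroup.closure_le]
      intro x hx
      rcases hx with rfl | hx
      · exact (show s4 ∈ hfinset by decide)
      · rw [Set.mem_singleton_iff] at hx
        subst hx
        exact (show r4 ∈ hfinset by decide)
    have hmem : Equiv.swap 0 1 ∈ Subgroup.closure ({s4, r4} : Set (Equiv.Perm (Fin 4))) := by
      rw [htop]; exact Subgroup.mem_top _
    have : Equiv.swap 0 1 ∈ hfinset := hle hmem
    exact absurd this (by decide)
  · intro g hg hall
    by_cases hgH : g ∈ hfinset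
    · have hset : (insert g ({s4, r4} : Set (Equiv.Perm (Fin 4)))) \ {g} = {s4, r4} :=
        Set.insert_diff_self_of_notMem hg
      apply hall g (Set.mem_insert _ _)
      rw [hset]
      exact H_le_closure g hgH
    · have hgs : g ≠ s4 := fun h => hgH (h ▸ (by decide : s4 ∈ hfinset))
      have hrs : r4 ≠ s4 := hsr.symm
      have hset : (insert g ({s4, r4} : Set (Equiv.Perm (Fin 4)))) \ {s4} = {g, r4} := by
        ext x
        simp only [Set.mem_diff, Set.mem_insert_iff, Set.mem_singleton_iff]
        constructor
        · rintro ⟨rfl | rfl | rfl, hne⟩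
          · exact Or.inl rfl
          · exact absurd rfl hne
          · exact Or.inr rfl
        · rintro (rfl | rfl)
          · exact ⟨Or.inl rfl, hgs⟩
          · exact ⟨Or.inr (Or.inr rfl), hrs⟩
      apply hall s4 (Set.mem_insert_of_mem _ (Set.mem_insert _ _))
      rw [hset]
      exact key g hgH
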